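/- Tightness under sign-stability (Remark 8): let x̲ ≤ x̄ in ℝⁿ and let Φ : [x̲,x̄] → ℝⁿ be differentiable on the box with S̲ ≤ DΦ(x) ≤ S̄ entrywise for all x ∈ [x̲,x̄]. Assume the bounds are sign-stable: for all i, j, either S̲_{ij} ≥ 0 or S̄_{ij} ≤ 0. With g defined as in the mixed-monotonicity construction (g_i(x,y) = Φ_i(z^i(x,y)) + α^i(x−y), where z^i_j = x_j and α^i_j = max(0,−S̲_{ij}) if (S̲_{ij}+S̄_{ij})/2 ≥ 0, and z^i_j = y_j and α^i_j = max(0,S̄_{ij}) otherwise), the interval [g(x̲,x̄), g(x̄,x̲)] is the unique tight interval over-approximation of Φ([x̲,x̄]); that is, for every i ∈ {1,…,n}: g_i(x̄,x̲) = max_{w∈[x̲,x̄]} Φ_i(w) and g_i(x̲,x̄) = min_{w∈[x̲,x̄]} Φ_i(w). -/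
import Mathlib


/-- The vertex `z^i(x,y)` of the mixed-monotonicity decomposition: component `j` is `x_j`
if `S*_{ij} = (S̲_{ij}+S̄_{ij})/2 ≥ 0`, and `y_j` otherwise. -/
noncomputable def mmVertex {n : ℕ} (Sl Su : Fin n → Fin n → ℝ) (i : Fin n)
    (x y : Fin n → ℝ) : Fin n → ℝ :=
  fun j => if 0 ≤ (Sl i j + Su i j) / 2 then x j else y j

/-- The coefficient row vector `α^i` of the mixed-monotonicity decomposition: component `j`
is `max(0, −S̲_{ij})` if `S*_{ij} = (S̲_{ij}+S̄_{ij})/2 ≥ 0`, and `max(0, S̄_{ij})`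
otherwise. -/
noncomputable def mmAlpha {n : ℕ} (Sl Su : Fin n → Fin n → ℝ) (i j : Fin n) : ℝ :=
  if 0 ≤ (Sl i j + Su i j) / 2 then max 0 (-Sl i j) else max 0 (Su i j)

/-- The decomposition function `g_i(x,y) = Φ_i(z^i(x,y)) + α^i (x − y)`. -/
noncomputable def mmG {n : ℕ} (Φ : (Fin n → ℝ) → Fin n → ℝ) (Sl Su : Fin n → Fin n → ℝ)
    (i : Fin n) (x y : Fin n → ℝ) : ℝ :=
  Φ (mmVertex Sl Su i x y) i + ∑ j : Fin n, mmAlpha Sl Su i j * (x j - y j)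

/-- **Tightness under sign-stability** (Remark 8).
If `Φ : [x̲,x̄] → ℝⁿ` is differentiable on the box with `S̲ ≤ DΦ(x) ≤ S̄` entrywise, and
the bounds are sign-stable (each entry interval `[S̲_{ij},S̄_{ij}]` lies in `[0,∞)` or in
`(−∞,0]`), then `[g(x̲,x̄), g(x̄,x̲)]` is the unique tight interval over-approximation of
`Φ([x̲,x̄])`: componentwise, `g_i(x̄,x̲)` is the maximum of `Φ_i` over the box and
`g_i(x̲,x̄)` is its minimum. -/
theorem mixed_monotonicity_tight_of_sign_stable {n : ℕ}
    (xl xu : Fin n → ℝ) (hx : xl ≤ xu)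
    (Φ : (Fin n → ℝ) → Fin n → ℝ)
    (Sl Su : Fin n → Fin n → ℝ)
    (hΦ : ∀ x ∈ Set.Icc xl xu, ∀ i : Fin n,
      ∃ L : (Fin n → ℝ) →L[ℝ] ℝ,
        HasFDerivWithinAt (fun w => Φ w i) L (Set.Icc xl xu) x ∧
        ∀ j, Sl i j ≤ L (Pi.single j 1) ∧ L (Pi.single j 1) ≤ Su i j)
    (hsign : ∀ i j, 0 ≤ Sl i j ∨ Su i j ≤ 0) :
    ∀ i : Fin n,
      IsGreatest ((fun w => Φ w i) '' Set.Icc xl xu) (mmG Φ Sl Su i xu xl) ∧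
      IsLeast ((fun w => Φ w i) '' Set.Icc xl xu) (mmG Φ Sl Su i xl xu) := by
  have hxl : xl ∈ Set.Icc xl xu := ⟨le_refl _, hx⟩
  -- Sl ≤ Su entrywise
  have hSlSu : ∀ i j, Sl i j ≤ Su i j := by
    intro i j
    obtain ⟨L, _, hb⟩ := hΦ xl hxl i
    exact (hb j).1.trans (hb j).2
  -- under sign stability, the "if" condition characterizes the signs
  have hA : ∀ i j, 0 ≤ (Sl i j + Su i j) / 2 → 0 ≤ Sl i j := by
    intro i j h
    rcases hsign i j with h1 | h1
    · exact h1
    · nlinarith [hSlSu i j]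
  have hB : ∀ i j, ¬ 0 ≤ (Sl i j + Su i j) / 2 → Su i j ≤ 0 := by
    intro i j h
    rcases hsign i j with h1 | h1
    · exact absurd (by nlinarith [hSlSu i j]) h
    · exact h1
  -- the α coefficients all vanish
  have halpha : ∀ i j, mmAlpha Sl Su i j = 0 := by
    intro i j
    unfold mmAlpha
    by_cases h : 0 ≤ (Sl i j + Su i j) / 2
    · simp [h, max_eq_left, neg_nonpos.2 (hA i j h)]
    · simp [h, max_eq_left (hB i j h)]
  have hG : ∀ i x y, mmG Φ Sl Su i x y = Φ (mmVertex Sl Su i x y) i := by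
    intro i x y
    unfold mmG
    simp [halpha]
  -- key monotonicity lemma
  have key : ∀ a ∈ Set.Icc xl xu, ∀ b ∈ Set.Icc xl xu, ∀ i : Fin n,
      (∀ j, (0 ≤ Sl i j ∧ a j ≤ b j) ∨ (Su i j ≤ 0 ∧ b j ≤ a j)) → Φ a i ≤ Φ b i := by
    intro a ha b hb i hj
    set γ : ℝ → (Fin n → ℝ) := fun t => a + t • (b - a) with hγdef
    have hγmem : ∀ t ∈ Set.Icc (0:ℝ) 1, γ t ∈ Set.Icc xl xu := by
      intro t ht
      have h := (convex_Icc xl xu) ha hb (by linarith [ht.2] : (0:ℝ) ≤ 1 - t) ht.1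
        (by ring)
      have : γ t = (1 - t) • a + t • b := by
        simp only [hγdef]
        module
      rw [this]; exact h
    have hf : ∀ t ∈ Set.Icc (0:ℝ) 1, ∃ c : ℝ, 0 ≤ c ∧
        HasDerivWithinAt (fun t => Φ (γ t) i) c (Set.Icc 0 1) t := by
      intro t ht
      obtain ⟨L, hL, hLb⟩ := hΦ (γ t) (hγmem t ht) i
      refine ⟨L (b - a), ?_, ?_⟩
      · have hba : (b - a) = ∑ j, (b j - a j) • (Pi.single j 1 : Fin n → ℝ) := by
          funext k
          simp [Pi.single_apply, Finset.sum_apply, mul_ite, Finset.sum_ite_eq]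
        rw [hba, map_sum]
        refine Finset.sum_nonneg fun j _ => ?_
        rw [map_smul, smul_eq_mul]
        rcases hj j with ⟨h1, h2⟩ | ⟨h1, h2⟩
        · exact mul_nonneg (by linarith) (h1.trans (hLb j).1)
        · nlinarith [(hLb j).2.trans h1]
      · have hγ' : HasDerivWithinAt γ (b - a) (Set.Icc 0 1) t := by
          have h1 : HasDerivAt (fun t : ℝ => a + t • (b - a)) (b - a) t := by
            simpa using ((hasDerivAt_id t).smul_const (b - a)).const_add a
          exact h1.hasDerivWithinAt
        exact hL.comp_hasDerivWithinAt t hγ' (fun u hu => hγmem u hu)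
    have hcont : ContinuousOn (fun t => Φ (γ t) i) (Set.Icc (0:ℝ) 1) := by
      intro t ht
      obtain ⟨c, _, hc⟩ := hf t ht
      exact hc.continuousWithinAt
    have hmono : MonotoneOn (fun t => Φ (γ t) i) (Set.Icc (0:ℝ) 1) := by
      apply monotoneOn_of_deriv_nonneg (convex_Icc 0 1) hcont
      · intro t ht
        rw [interior_Icc] at ht
        obtain ⟨c, _, hc⟩ := hf t (Set.Ioo_subset_Icc_self ht)
        exact ((hc.hasDerivAt (Icc_mem_nhds ht.1 ht.2)).differentiableAt).differentiableWithinAt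
      · intro t ht
        rw [interior_Icc] at ht
        obtain ⟨c, hc0, hc⟩ := hf t (Set.Ioo_subset_Icc_self ht)
        rw [(hc.hasDerivAt (Icc_mem_nhds ht.1 ht.2)).deriv]
        exact hc0
    have h01 := hmono (Set.left_mem_Icc.2 zero_le_one) (Set.right_mem_Icc.2 zero_le_one)
      zero_le_one
    simpa [hγdef] using h01
  intro i
  have hzu : mmVertex Sl Su i xu xl ∈ Set.Icc xl xu := by
    constructor <;> intro j <;> unfold mmVertex <;> by_cases h : 0 ≤ (Sl i j + Su i j) / 2 <;>
      simp [h, hx j]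
  have hzl : mmVertex Sl Su i xl xu ∈ Set.Icc xl xu := by
    constructor <;> intro j <;> unfold mmVertex <;> by_cases h : 0 ≤ (Sl i j + Su i j) / 2 <;>
      simp [h, hx j]
  constructor
  · constructor
    · exact ⟨_, hzu, (hG i xu xl).symm⟩
    · rintro y ⟨w, hw, rfl⟩
      rw [hG]
      apply key w hw _ hzu i
      intro j
      unfold mmVertex
      by_cases h : 0 ≤ (Sl i j + Su i j) / 2
      · exact Or.inl ⟨hA i j h, by simp [h]; exact (hw.2 j)⟩
      · exact Or.inr ⟨hB i j h, by simp [h]; exact (hw.1 j)⟩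
  · constructor
    · exact ⟨_, hzl, (hG i xl xu).symm⟩
    · rintro y ⟨w, hw, rfl⟩
      rw [hG]
      apply key _ hzl w hw i
      intro j
      unfold mmVertex
      by_cases h : 0 ≤ (Sl i j + Su i j) / 2
      · exact Or.inl ⟨hA i j h, by simp [h]; exact (hw.1 j)⟩
      · exact Or.inr ⟨hB i j h, by simp [h]; exact (hw.2 j)⟩
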